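/- arXiv:1911.08604 — 7 statements merged into one kernel-verified Lean document; each statement's English description precedes it below -/
import Mathlib

section
/- Let A ∈ ℂ^{n×n}, b, c ∈ ℂ^n, d ∈ ℂ with d ≠ 0, and suppose P [[sI_n - A, -b],[-c^T, -d]] Q = [[sI_{n-r} - Λ, 0],[0, sN - I_{r+1}]] for all s, where P, Q are nonsingular, Λ is square of size n-r, and N is nilpotent of size r+1. Then r = 0. -/
open Matrix Polynomial

private lemma my_eval_charpoly {m : Type*} [Fintype m] [DecidableEq m]
    (M : Matrix m m ℂ) (t : ℂ) : M.charpoly.eval t = (t • (1 : Matrix m m ℂ) - M).det := by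
  rw [Matrix.charpoly, ← coe_evalRingHom, RingHom.map_det]
  congr 1
  ext i j
  by_cases h : i = j
  · subst h
    simp [Matrix.charmatrix_apply_eq, Matrix.one_apply]
  · simp [Matrix.charmatrix_apply_ne _ _ _ h, Matrix.one_apply, h]

private lemma det_smul_nilpotent_sub_one {m : Type*} [Fintype m] [DecidableEq m]
    (N : Matrix m m ℂ) (hN : IsNilpotent N) (s : ℂ) :
    (s • N - 1).det = (-1 : ℂ) ^ (Fintype.card m) := by
  have hsN : IsNilpotent (s • N) := by
    obtain ⟨k, hk⟩ := hN
    exact ⟨k, by rw [_root_.smul_pow, hk, smul_zero]⟩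
  have hcp : (s • N).charpoly = X ^ (Fintype.card m) :=
    sub_eq_zero.mp (Matrix.isNilpotent_charpoly_sub_pow_of_isNilpotent hsN).eq_zero
  have h1 : ((1 : ℂ) • (1 : Matrix m m ℂ) - s • N).det = 1 := by
    rw [← my_eval_charpoly, hcp]
    simp
  have : s • N - 1 = -((1 : ℂ) • (1 : Matrix m m ℂ) - s • N) := by
    simp
  rw [this, Matrix.det_neg, h1, mul_one]

/-- In the Weierstrass form of the Rosenbrock matrix, if the feedthrough `d` is nonzero,
then `r = 0`. -/
theorem stmt_5 (n r : ℕ) (hr : r ≤ n)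
    (A : Matrix (Fin n) (Fin n) ℂ) (b c : Fin n → ℂ) (d : ℂ)
    (P : Matrix (Fin (n - r) ⊕ Fin (r + 1)) (Fin n ⊕ Unit) ℂ)
    (P' : Matrix (Fin n ⊕ Unit) (Fin (n - r) ⊕ Fin (r + 1)) ℂ)
    (Q : Matrix (Fin n ⊕ Unit) (Fin (n - r) ⊕ Fin (r + 1)) ℂ)
    (Q' : Matrix (Fin (n - r) ⊕ Fin (r + 1)) (Fin n ⊕ Unit) ℂ)
    (hPP' : P * P' = 1) (hP'P : P' * P = 1) (hQQ' : Q * Q' = 1) (hQ'Q : Q' * Q = 1)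
    (Lam : Matrix (Fin (n - r)) (Fin (n - r)) ℂ)
    (N : Matrix (Fin (r + 1)) (Fin (r + 1)) ℂ) (hN : IsNilpotent N)
    (hdecomp : ∀ s : ℂ,
      P * (Matrix.fromBlocks (s • (1 : Matrix (Fin n) (Fin n) ℂ) - A)
            (Matrix.of fun i (_ : Unit) => -b i)
            (Matrix.of fun (_ : Unit) j => -c j)
            (Matrix.of fun (_ : Unit) (_ : Unit) => -d)) * Q
        = Matrix.fromBlocks (s • (1 : Matrix (Fin (n - r)) (Fin (n - r)) ℂ) - Lam) 0 0
            (s • N - 1))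
    (hd : d ≠ 0) :
    r = 0 := by
  classical
  -- the pencil
  set W : ℂ → Matrix (Fin n ⊕ Unit) (Fin n ⊕ Unit) ℂ := fun s =>
    Matrix.fromBlocks (s • (1 : Matrix (Fin n) (Fin n) ℂ) - A)
      (Matrix.of fun i (_ : Unit) => -b i)
      (Matrix.of fun (_ : Unit) j => -c j)
      (Matrix.of fun (_ : Unit) (_ : Unit) => -d) with hW
  -- equivalence of index types
  have hcard : Fintype.card (Fin n ⊕ Unit) = Fintype.card (Fin (n - r) ⊕ Fin (r + 1)) := by
    simp [Fintype.card_sum]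
    omega
  let e : (Fin n ⊕ Unit) ≃ (Fin (n - r) ⊕ Fin (r + 1)) := Fintype.equivOfCardEq hcard
  set Psq := P.submatrix id ⇑e.symm with hPsq
  set Qsq := Q.submatrix ⇑e.symm id with hQsq
  have hdetP : Psq.det ≠ 0 := by
    have : Psq * P'.submatrix ⇑e.symm id = 1 := by
      rw [hPsq, Matrix.submatrix_mul_equiv, hPP']
      ext i j; simp [Matrix.one_apply]
    intro h
    have := congrArg Matrix.det this
    rw [Matrix.det_mul, h, zero_mul, Matrix.det_one] at this
    exact zero_ne_one this
  have hdetQ : Qsq.det ≠ 0 := by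
    have : Q'.submatrix id ⇑e.symm * Qsq = 1 := by
      rw [hQsq, Matrix.submatrix_mul_equiv, hQ'Q]
      ext i j; simp [Matrix.one_apply]
    intro h
    have := congrArg Matrix.det this
    rw [Matrix.det_mul, h, mul_zero, Matrix.det_one] at this
    exact zero_ne_one this
  -- determinant identity for each s
  have key : ∀ s : ℂ, Psq.det * (W s).det * Qsq.det
      = (s • (1 : Matrix (Fin (n - r)) (Fin (n - r)) ℂ) - Lam).det * (s • N - 1).det := by
    intro s
    have h1 : Psq * (W s).submatrix ⇑e.symm ⇑e.symm * Qsq = P * W s * Q := by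
      rw [hPsq, hQsq, Matrix.submatrix_mul_equiv, Matrix.submatrix_mul_equiv,
        Matrix.submatrix_id_id]
    have h2 := congrArg Matrix.det h1
    rw [Matrix.det_mul, Matrix.det_mul, Matrix.det_submatrix_equiv_self, hdecomp s,
      Matrix.det_fromBlocks_zero₂₁] at h2
    exact h2
  -- compute det (W s) via the Schur complement
  set M : Matrix (Fin n) (Fin n) ℂ := A - Matrix.of (fun i j => b i * d⁻¹ * c j) with hM
  have hWdet : ∀ s : ℂ, (W s).det = -d * M.charpoly.eval s := by
    intro s
    have hDinv : (Matrix.of fun (_ : Unit) (_ : Unit) => -d) *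
        (Matrix.of fun (_ : Unit) (_ : Unit) => (-d)⁻¹) = 1 := by
      ext i j
      simp [Matrix.mul_apply, Matrix.one_apply, Subsingleton.elim i j,
        mul_inv_cancel₀ (neg_ne_zero.mpr hd), mul_inv_cancel₀ hd]
    have hDinv' : (Matrix.of fun (_ : Unit) (_ : Unit) => (-d)⁻¹) *
        (Matrix.of fun (_ : Unit) (_ : Unit) => -d) = 1 := by
      ext i j
      simp [Matrix.mul_apply, Matrix.one_apply, Subsingleton.elim i j,
        inv_mul_cancel₀ (neg_ne_zero.mpr hd), inv_mul_cancel₀ hd]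
    letI : Invertible (Matrix.of fun (_ : Unit) (_ : Unit) => -d) :=
      ⟨Matrix.of fun (_ : Unit) (_ : Unit) => (-d)⁻¹, hDinv', hDinv⟩
    rw [hW]
    rw [Matrix.det_fromBlocks₂₂]
    have hdetD : (Matrix.of fun (_ : Unit) (_ : Unit) => -d).det = -d := by
      simp [Matrix.det_unique]
    have hschur : s • (1 : Matrix (Fin n) (Fin n) ℂ) - A -
        (Matrix.of fun i (_ : Unit) => -b i) *
          ⅟(Matrix.of fun (_ : Unit) (_ : Unit) => -d) *
          (Matrix.of fun (_ : Unit) j => -c j)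
        = s • (1 : Matrix (Fin n) (Fin n) ℂ) - M := by
      have hinv : ⅟(Matrix.of fun (_ : Unit) (_ : Unit) => -d)
          = Matrix.of fun (_ : Unit) (_ : Unit) => (-d)⁻¹ := rfl
      rw [hinv, hM]
      ext i j
      simp [Matrix.mul_apply, Matrix.sub_apply]
      ring
    rw [hdetD, hschur, ← my_eval_charpoly]
  -- the RHS nilpotent determinant
  have hNdet : ∀ s : ℂ, (s • N - 1).det = (-1 : ℂ) ^ (r + 1) := by
    intro s
    rw [det_smul_nilpotent_sub_one N hN s]
    simp
  -- polynomial identity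
  have hpoly : Polynomial.C (Psq.det * Qsq.det * (-d)) * M.charpoly
      = Polynomial.C ((-1 : ℂ) ^ (r + 1)) * Lam.charpoly := by
    apply Polynomial.funext
    intro s
    have := key s
    rw [hWdet s, hNdet s] at this
    simp only [eval_mul, eval_C]
    rw [my_eval_charpoly Lam s]
    calc Psq.det * Qsq.det * -d * eval s M.charpoly
        = Psq.det * (-d * eval s M.charpoly) * Qsq.det := by ring
      _ = (s • (1 : Matrix (Fin (n - r)) (Fin (n - r)) ℂ) - Lam).det * (-1 : ℂ) ^ (r + 1) := this
      _ = (-1 : ℂ) ^ (r + 1) * (s • (1 : Matrix (Fin (n - r)) (Fin (n - r)) ℂ) - Lam).det := by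
          ring
  -- compare degrees
  have hc1 : Psq.det * Qsq.det * (-d) ≠ 0 :=
    mul_ne_zero (mul_ne_zero hdetP hdetQ) (neg_ne_zero.mpr hd)
  have hc2 : ((-1 : ℂ) ^ (r + 1)) ≠ 0 := pow_ne_zero _ (by norm_num)
  have hdeg := congrArg Polynomial.natDegree hpoly
  rw [Polynomial.natDegree_C_mul hc1, Polynomial.natDegree_C_mul hc2,
    Matrix.charpoly_natDegree_eq_dim, Matrix.charpoly_natDegree_eq_dim] at hdeg
  simp [Fintype.card_fin] at hdeg
  omega
end

section
/- Let A ∈ ℂ^{n×n}, b, c ∈ ℂ^n and d = 0, and suppose P [[sI_n - A, -b],[-c^T, 0]] Q = [[sI_{n-r} - Λ, 0],[0, sN - I_{r+1}]] for all s, where P, Q are nonsingular, Λ is square of size n-r, and N is nilpotent of size r+1 with r ≥ 1. Then c^T A^k b = 0 for k = 0, 1, ..., r-2 and c^T A^{r-1} b ≠ 0. -/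
open Matrix Polynomial

lemma aux_charmatrix_map_eval {m : Type*} [Fintype m] [DecidableEq m] (M : Matrix m m ℂ) (s : ℂ) :
    (charmatrix M).map (Polynomial.eval s) = s • (1 : Matrix m m ℂ) - M := by
  ext i j
  by_cases hij : i = j <;>
    simp [hij, charmatrix_apply_eq, charmatrix_apply_ne, Matrix.one_apply]

lemma aux_eval_charpoly {m : Type*} [Fintype m] [DecidableEq m] (M : Matrix m m ℂ) (s : ℂ) :
    (M.charpoly).eval s = (s • (1 : Matrix m m ℂ) - M).det := by
  have h := aux_charmatrix_map_eval M s
  rw [Matrix.charpoly, ← h]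
  exact (RingHom.map_det (evalRingHom s) _)

lemma aux_nil_charpoly {m : Type*} [Fintype m] [DecidableEq m] (M : Matrix m m ℂ)
    (h : IsNilpotent M) : M.charpoly = Polynomial.X ^ (Fintype.card m) := by
  have h2 := Matrix.isNilpotent_charpoly_sub_pow_of_isNilpotent h
  rw [← sub_eq_zero]
  exact h2.eq_zero

lemma aux_det_sN_sub_one {m : ℕ} (N : Matrix (Fin m) (Fin m) ℂ) (hN : IsNilpotent N) (s : ℂ) :
    (s • N - 1).det = (-1 : ℂ) ^ m := by
  have h1 : IsNilpotent (s • N) := hN.smul s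
  have h2 := aux_eval_charpoly (s • N) 1
  rw [aux_nil_charpoly _ h1] at h2
  simp only [eval_pow, eval_X, one_pow, Fintype.card_fin, one_smul] at h2
  have h3 : s • N - 1 = -(1 - s • N) := by abel
  rw [h3, Matrix.det_neg, ← h2]
  simp

lemma aux_det_rosenbrock {n : ℕ} (A : Matrix (Fin n) (Fin n) ℂ) (b c : Fin n → ℂ) (s : ℂ)
    (hs : (s • (1 : Matrix (Fin n) (Fin n) ℂ) - A).det ≠ 0) :
    (Matrix.fromBlocks (s • (1 : Matrix (Fin n) (Fin n) ℂ) - A)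
        (Matrix.of fun i (_ : Unit) => -b i) (Matrix.of fun (_ : Unit) j => -c j)
        (Matrix.of fun (_ : Unit) (_ : Unit) => (0:ℂ))).det
      = -(c ⬝ᵥ ((s • (1 : Matrix (Fin n) (Fin n) ℂ) - A).adjugate *ᵥ b)) := by
  set M := s • (1 : Matrix (Fin n) (Fin n) ℂ) - A with hM
  haveI : Invertible M := M.invertibleOfIsUnitDet (isUnit_iff_ne_zero.2 hs)
  rw [Matrix.det_fromBlocks₁₁]
  have hdet1 : ∀ (X : Matrix Unit Unit ℂ), X.det = X default default := fun X =>
    Matrix.det_unique X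
  rw [hdet1]
  have hinv : (⅟M : Matrix (Fin n) (Fin n) ℂ) = (M.det)⁻¹ • M.adjugate := by
    rw [invOf_eq_nonsing_inv, Matrix.inv_def, Ring.inverse_eq_inv']
  have key : ((Matrix.of fun (_ : Unit) j => -c j) * ⅟M *
      (Matrix.of fun i (_ : Unit) => -b i)) default default
      = (M.det)⁻¹ * (c ⬝ᵥ (M.adjugate *ᵥ b)) := by
    simp only [Matrix.mul_apply, hinv, Matrix.smul_apply, Matrix.of_apply, smul_eq_mul,
      dotProduct, Matrix.mulVec, Finset.mul_sum, Finset.sum_mul]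
    rw [Finset.sum_comm]
    apply Finset.sum_congr rfl
    intro j _
    apply Finset.sum_congr rfl
    intro i _
    ring
  simp only [Matrix.sub_apply, Matrix.of_apply, key]
  field_simp
  ring

lemma aux_dot_sum {n : ℕ} (c b : Fin n → ℂ) (F : Finset ℕ) (f : ℕ → ℂ)
    (M : ℕ → Matrix (Fin n) (Fin n) ℂ) :
    c ⬝ᵥ ((∑ i ∈ F, f i • M i) *ᵥ b) = ∑ i ∈ F, f i * (c ⬝ᵥ (M i *ᵥ b)) := by
  classical
  induction F using Finset.induction_on with
  | empty => simp [Matrix.zero_mulVec]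
  | insert _ _ hx IH =>
    rw [Finset.sum_insert hx, Finset.sum_insert hx, Matrix.add_mulVec, dotProduct_add, ← IH,
      Matrix.smul_mulVec, dotProduct_smul]
    simp

/-- In the Weierstrass form with zero feedthrough (`d = 0`) and `r ≥ 1`, the Markov
parameters satisfy `cᵀ Aᵏ b = 0` for `k = 0, …, r - 2` and `cᵀ A^(r-1) b ≠ 0`. -/
theorem stmt_6 (n r : ℕ) (hr : r ≤ n) (hr1 : 1 ≤ r)
    (A : Matrix (Fin n) (Fin n) ℂ) (b c : Fin n → ℂ)
    (P : Matrix (Fin (n - r) ⊕ Fin (r + 1)) (Fin n ⊕ Unit) ℂ)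
    (P' : Matrix (Fin n ⊕ Unit) (Fin (n - r) ⊕ Fin (r + 1)) ℂ)
    (Q : Matrix (Fin n ⊕ Unit) (Fin (n - r) ⊕ Fin (r + 1)) ℂ)
    (Q' : Matrix (Fin (n - r) ⊕ Fin (r + 1)) (Fin n ⊕ Unit) ℂ)
    (hPP' : P * P' = 1) (hP'P : P' * P = 1) (hQQ' : Q * Q' = 1) (hQ'Q : Q' * Q = 1)
    (Lam : Matrix (Fin (n - r)) (Fin (n - r)) ℂ)
    (N : Matrix (Fin (r + 1)) (Fin (r + 1)) ℂ) (hN : IsNilpotent N)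
    (hdecomp : ∀ s : ℂ,
      P * (Matrix.fromBlocks (s • (1 : Matrix (Fin n) (Fin n) ℂ) - A)
            (Matrix.of fun i (_ : Unit) => -b i)
            (Matrix.of fun (_ : Unit) j => -c j)
            (Matrix.of fun (_ : Unit) (_ : Unit) => (0 : ℂ))) * Q
        = Matrix.fromBlocks (s • (1 : Matrix (Fin (n - r)) (Fin (n - r)) ℂ) - Lam) 0 0
            (s • N - 1)) :
    (∀ k : ℕ, k + 2 ≤ r → c ⬝ᵥ ((A ^ k) *ᵥ b) = 0) ∧ c ⬝ᵥ ((A ^ (r - 1)) *ᵥ b) ≠ 0 := by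
  classical
  have hn : 1 ≤ n := le_trans hr1 hr
  -- an equivalence of index types
  have hcard : Fintype.card (Fin (n - r) ⊕ Fin (r + 1)) = Fintype.card (Fin n ⊕ Unit) := by
    simp only [Fintype.card_sum, Fintype.card_fin, Fintype.card_unit]
    omega
  set e : (Fin (n - r) ⊕ Fin (r + 1)) ≃ (Fin n ⊕ Unit) := Fintype.equivOfCardEq hcard with he
  set Ps := P.submatrix id ⇑e with hPs
  set Qs := Q.submatrix ⇑e id with hQs
  -- determinants of the square forms of P and Q are nonzero
  have hPmul : Ps * (P'.submatrix ⇑e id) = 1 := by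
    rw [hPs, Matrix.submatrix_mul_equiv P P' id e id, hPP', Matrix.submatrix_id_id]
  have hQmul : (Q'.submatrix id ⇑e) * Qs = 1 := by
    rw [hQs, Matrix.submatrix_mul_equiv Q' Q id e id, hQ'Q, Matrix.submatrix_id_id]
  have hdP : Ps.det ≠ 0 := by
    have h := congrArg Matrix.det hPmul
    rw [Matrix.det_mul, Matrix.det_one] at h
    exact left_ne_zero_of_mul_eq_one h
  have hdQ : Qs.det ≠ 0 := by
    have h := congrArg Matrix.det hQmul
    rw [Matrix.det_mul, Matrix.det_one] at h
    exact right_ne_zero_of_mul_eq_one h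
  -- pointwise determinant identity
  have hpt : ∀ s : ℂ, (s • (1 : Matrix (Fin n) (Fin n) ℂ) - A).det ≠ 0 →
      Ps.det * (-(c ⬝ᵥ ((s • (1 : Matrix (Fin n) (Fin n) ℂ) - A).adjugate *ᵥ b))) * Qs.det
        = (s • (1 : Matrix (Fin (n - r)) (Fin (n - r)) ℂ) - Lam).det * (-1 : ℂ) ^ (r + 1) := by
    intro s hs
    set R := Matrix.fromBlocks (s • (1 : Matrix (Fin n) (Fin n) ℂ) - A)
        (Matrix.of fun i (_ : Unit) => -b i) (Matrix.of fun (_ : Unit) j => -c j)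
        (Matrix.of fun (_ : Unit) (_ : Unit) => (0:ℂ)) with hR
    have h1 : Ps * (R.submatrix ⇑e ⇑e) * Qs
        = Matrix.fromBlocks (s • (1 : Matrix (Fin (n - r)) (Fin (n - r)) ℂ) - Lam) 0 0
            (s • N - 1) := by
      rw [hPs, hQs, Matrix.submatrix_mul_equiv P R id e ⇑e,
        Matrix.submatrix_mul_equiv (P * R) Q id e id, Matrix.submatrix_id_id]
      exact hdecomp s
    have h2 := congrArg Matrix.det h1
    rw [Matrix.det_mul, Matrix.det_mul, Matrix.det_submatrix_equiv_self, hR,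
      aux_det_rosenbrock A b c s hs, Matrix.det_fromBlocks_zero₁₂,
      aux_det_sN_sub_one N hN s] at h2
    exact h2
  -- the polynomial J
  set Jp : Polynomial ℂ :=
    (fun i => Polynomial.C (c i)) ⬝ᵥ ((charmatrix A).adjugate *ᵥ fun i => Polynomial.C (b i))
    with hJp
  have heval : ∀ s : ℂ, Jp.eval s
      = c ⬝ᵥ ((s • (1 : Matrix (Fin n) (Fin n) ℂ) - A).adjugate *ᵥ b) := by
    intro s
    have hadj : ((charmatrix A).adjugate).map (Polynomial.eval s)
        = (s • (1 : Matrix (Fin n) (Fin n) ℂ) - A).adjugate := by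
      rw [← aux_charmatrix_map_eval A s]
      have := RingHom.map_adjugate (Polynomial.evalRingHom s) (charmatrix A)
      simpa using this
    simp only [hJp, dotProduct, Matrix.mulVec, Finset.sum_mul, eval_finset_sum, eval_mul, eval_C]
    refine Finset.sum_congr rfl fun i _ => ?_
    rw [← hadj]
    simp [Matrix.map_apply]
  -- the polynomial identity
  have hS : {s : ℂ | (A.charpoly).eval s ≠ 0}.Infinite := by
    have h0 : A.charpoly ≠ 0 := (A.charpoly_monic).ne_zero
    have hfin := Polynomial.finite_setOf_isRoot h0
    have := hfin.infinite_compl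
    convert this using 1
    ext s; simp [Polynomial.IsRoot]
  have hpoly : Polynomial.C (Ps.det * Qs.det * (-1)) * Jp
      = Polynomial.C ((-1 : ℂ) ^ (r + 1)) * Lam.charpoly := by
    apply Polynomial.eq_of_infinite_eval_eq
    apply hS.mono
    intro s hs
    simp only [Set.mem_setOf_eq] at hs ⊢
    have hs' : (s • (1 : Matrix (Fin n) (Fin n) ℂ) - A).det ≠ 0 := by
      rw [← aux_eval_charpoly]; exact hs
    have h := hpt s hs'
    rw [eval_mul, eval_mul, eval_C, eval_C, heval s, aux_eval_charpoly Lam s]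
    linear_combination h
  have hcoefpoly : ∀ t, (Ps.det * Qs.det * (-1)) * Jp.coeff t
      = (-1 : ℂ) ^ (r + 1) * (Lam.charpoly).coeff t := by
    intro t
    have := congrArg (fun p => Polynomial.coeff p t) hpoly
    simpa only [Polynomial.coeff_C_mul] using this
  have hLamdeg : (Lam.charpoly).natDegree = n - r := by
    rw [Matrix.charpoly_natDegree_eq_dim, Fintype.card_fin]
  have hzero : ∀ t, n - r < t → Jp.coeff t = 0 := by
    intro t ht
    have h := hcoefpoly t
    have h2 : (Lam.charpoly).coeff t = 0 :=
      Polynomial.coeff_eq_zero_of_natDegree_lt (by omega)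
    rw [h2, mul_zero, mul_eq_zero] at h
    rcases h with h | h
    · exact absurd h (by simp [hdP, hdQ])
    · exact h
  have hlead : Jp.coeff (n - r) ≠ 0 := by
    have h := hcoefpoly (n - r)
    have h2 : (Lam.charpoly).coeff (n - r) = 1 := by
      have h3 := (Lam.charpoly_monic).coeff_natDegree
      rwa [hLamdeg] at h3
    intro h0
    rw [h0, h2, mul_zero, mul_one] at h
    exact pow_ne_zero _ (by norm_num : (-1 : ℂ) ≠ 0) h.symm
  -- matrix polynomial recurrence
  set q : Polynomial (Matrix (Fin n) (Fin n) ℂ) := matPolyEquiv ((charmatrix A).adjugate) with hq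
  have hcq : ∀ t, Jp.coeff t = c ⬝ᵥ ((q.coeff t) *ᵥ b) := by
    intro t
    simp only [hJp, hq, dotProduct, Matrix.mulVec, Finset.sum_mul, Polynomial.finset_sum_coeff,
      coeff_mul_C, coeff_C_mul, matPolyEquiv_coeff_apply]
  have hq1 : (X - Polynomial.C A) * q
      = (A.charpoly).map (algebraMap ℂ (Matrix (Fin n) (Fin n) ℂ)) := by
    have h := Matrix.mul_adjugate (charmatrix A)
    have h2 := congrArg matPolyEquiv h
    rw [_root_.map_mul, matPolyEquiv_charmatrix] at h2
    rw [hq, h2]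
    exact matPolyEquiv_smul_one _
  haveI : Nontrivial (Matrix (Fin n) (Fin n) ℂ) := by
    haveI : NeZero n := ⟨by omega⟩
    infer_instance
  have hq0 : ∀ t, n ≤ t → q.coeff t = 0 := by
    intro t ht
    rcases eq_or_ne q 0 with h0 | h0
    · simp [h0]
    · have hdeg : ((X - Polynomial.C A) * q).natDegree = 1 + q.natDegree := by
        rw [Polynomial.natDegree_mul']
        · rw [Polynomial.natDegree_X_sub_C]
        · rw [(Polynomial.monic_X_sub_C A).leadingCoeff, one_mul]
          exact Polynomial.leadingCoeff_ne_zero.mpr h0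
      have hle : ((X - Polynomial.C A) * q).natDegree ≤ n := by
        rw [hq1]
        refine le_trans Polynomial.natDegree_map_le ?_
        simp [Matrix.charpoly_natDegree_eq_dim]
      apply Polynomial.coeff_eq_zero_of_natDegree_lt
      omega
  have hrec : ∀ t, q.coeff t = A * q.coeff (t + 1) + ((A.charpoly).coeff (t + 1)) • 1 := by
    intro t
    have h := congrArg (fun p => Polynomial.coeff p (t + 1)) hq1
    simp only [Polynomial.coeff_sub, sub_mul, Polynomial.coeff_X_mul,
      Polynomial.coeff_C_mul, Polynomial.coeff_map] at h
    rw [Algebra.algebraMap_eq_smul_one] at h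
    rw [← h]
    abel
  have hclosed : ∀ d t, t + d = n →
      q.coeff t = ∑ i ∈ Finset.range d, ((A.charpoly).coeff (t + 1 + i)) • A ^ i := by
    intro d
    induction d with
    | zero => intro t ht; simpa using hq0 t (by omega)
    | succ d IH =>
      intro t ht
      rw [hrec t, IH (t + 1) (by omega)]
      rw [Finset.sum_range_succ']
      simp only [Finset.mul_sum, Matrix.mul_smul]
      congr 1
      refine Finset.sum_congr rfl fun i _ => ?_
      rw [show t + 1 + (i + 1) = t + 1 + 1 + i by ring]
      rw [pow_succ']
  have hJcoeff : ∀ d t, t + d = n → Jp.coeff t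
      = ∑ i ∈ Finset.range d, ((A.charpoly).coeff (t + 1 + i)) * (c ⬝ᵥ ((A ^ i) *ᵥ b)) := by
    intro d t ht
    rw [hcq t, hclosed d t ht, aux_dot_sum]
  have hAn : (A.charpoly).coeff n = 1 := by
    have h := (A.charpoly_monic).coeff_natDegree
    rwa [Matrix.charpoly_natDegree_eq_dim, Fintype.card_fin] at h
  -- part 1
  have key : ∀ k : ℕ, k + 2 ≤ r → c ⬝ᵥ ((A ^ k) *ᵥ b) = 0 := by
    intro k
    induction k using Nat.strong_induction_on with
    | _ k IH =>
      intro hk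
      have hsum := hJcoeff (k + 1) (n - 1 - k) (by omega)
      rw [hzero (n - 1 - k) (by omega), Finset.sum_range_succ,
        show n - 1 - k + 1 + k = n by omega, hAn, one_mul] at hsum
      rw [Finset.sum_eq_zero (fun i hi => by
        have hik := Finset.mem_range.mp hi
        rw [IH i hik (by omega), mul_zero])] at hsum
      simpa using hsum.symm
  refine ⟨key, ?_⟩
  -- part 2
  obtain ⟨m, hm⟩ : ∃ m, r = m + 1 := ⟨r - 1, by omega⟩
  have hsum := hJcoeff (m + 1) (n - r) (by omega)
  rw [Finset.sum_range_succ, show n - r + 1 + m = n by omega, hAn, one_mul] at hsum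
  rw [Finset.sum_eq_zero (fun i hi => by
    have hik := Finset.mem_range.mp hi
    rw [key i (by omega), mul_zero])] at hsum
  rw [zero_add] at hsum
  rw [show r - 1 = m by omega, ← hsum]
  exact hlead
end

section
/- In the Weierstrass form P [[sI_n - A, -b],[-c^T, -d]] Q = [[sI_{n-r} - Λ, 0],[0, sN - I_{r+1}]] with P, Q nonsingular and N nilpotent of size r+1, the nilpotent N has rank exactly r, i.e., N consists of a single Jordan block: N^r ≠ 0 and N^{r+1} = 0. -/
/-!
Comparing the coefficients of `s` in the decomposition gives
`P * diag(I_n, 0) * Q = diag(I_{n-r}, N)`; as `P` and `Q` have one-sided inverses, ranks agree and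
`rank N = r`. A nilpotent matrix of size `r + 1` satisfies `N ^ (r + 1) = 0` by Cayley–Hamilton.
Finally `dim ker N ^ k ≤ k * dim ker N = k`, because `ker N ^ (k + 1)` is the preimage of
`ker N ^ k` under `N`; so `N ^ r = 0` would force `r + 1 ≤ r`.
-/

open Matrix

theorem LinearMap.finrank_comap_le {K V W : Type*} [DivisionRing K] [AddCommGroup V]
    [Module K V] [AddCommGroup W] [Module K W] [FiniteDimensional K V] [FiniteDimensional K W]
    (f : V →ₗ[K] W) (p : Submodule K W) :
    Module.finrank K (p.comap f) ≤ Module.finrank K p + Module.finrank K (LinearMap.ker f) := by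
  have h := LinearMap.lift_rank_comap_le (f := f) p
  simp only [← Module.finrank_eq_rank, Cardinal.lift_natCast] at h
  exact_mod_cast h

theorem Module.End.finrank_ker_pow_le {K V : Type*} [DivisionRing K] [AddCommGroup V]
    [Module K V] [FiniteDimensional K V] (f : Module.End K V) (k : ℕ) :
    Module.finrank K (LinearMap.ker (f ^ k)) ≤ k * Module.finrank K (LinearMap.ker f) := by
  induction k with
  | zero => simp [Module.End.one_eq_id]
  | succ k ih =>
    rw [pow_succ, Module.End.mul_eq_comp, LinearMap.ker_comp, Nat.succ_mul]
    exact (f.finrank_comap_le _).trans (by omega)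

theorem Submodule.finrank_prod {K V W : Type*} [DivisionRing K] [AddCommGroup V]
    [Module K V] [AddCommGroup W] [Module K W] [FiniteDimensional K V] [FiniteDimensional K W]
    (p : Submodule K V) (q : Submodule K W) :
    Module.finrank K (p.prod q) = Module.finrank K p + Module.finrank K q := by
  have hrange : LinearMap.range (p.subtype.prodMap q.subtype) = p.prod q := by simp
  rw [← hrange, LinearMap.finrank_range_of_inj, Module.finrank_prod]
  exact Prod.map_injective.mpr ⟨p.injective_subtype, q.injective_subtype⟩

theorem Matrix.pow_card_eq_zero_of_isNilpotent {R m : Type*} [CommRing R] [IsDomain R]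
    [Fintype m] [DecidableEq m] {N : Matrix m m R} (hN : IsNilpotent N) :
    N ^ Fintype.card m = 0 := by
  have hchar : N.charpoly = Polynomial.X ^ Fintype.card m :=
    sub_eq_zero.mp (isNilpotent_charpoly_sub_pow_of_isNilpotent hN).eq_zero
  simpa [hchar] using N.aeval_self_charpoly

theorem Matrix.card_le_mul_card_sub_rank_of_pow_eq_zero {K m : Type*} [Field K] [Fintype m]
    [DecidableEq m] {N : Matrix m m K} {k : ℕ} (hN : N ^ k = 0) :
    Fintype.card m ≤ k * (Fintype.card m - N.rank) := by
  have hnullity : N.rank + Module.finrank K (LinearMap.ker (toLin' N)) = Fintype.card m := by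
    rw [Matrix.rank, ← toLin'_apply']
    simpa using (toLin' N).finrank_range_add_finrank_ker
  have hker : LinearMap.ker (toLin' N ^ k) = ⊤ := by
    rw [← toLin'_pow, hN, map_zero, LinearMap.ker_zero]
  have := Module.End.finrank_ker_pow_le (toLin' N) k
  rwa [hker, finrank_top, Module.finrank_fintype_fun_eq_card,
    show Module.finrank K (LinearMap.ker (toLin' N)) = Fintype.card m - N.rank by omega] at this

theorem Matrix.rank_fromBlocks_zero_zero {K l l' m m' : Type*} [Field K] [Fintype l] [Fintype l']
    [Fintype m] [Fintype m'] (A : Matrix l l' K) (D : Matrix m m' K) :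
    (fromBlocks A 0 0 D).rank = A.rank + D.rank := by
  have hconj : (fromBlocks A 0 0 D).mulVecLin
      = (LinearEquiv.sumArrowLequivProdArrow l m K K).symm.toLinearMap ∘ₗ
          (A.mulVecLin.prodMap D.mulVecLin) ∘ₗ
          (LinearEquiv.sumArrowLequivProdArrow l' m' K K).toLinearMap := by
    ext x (i | i) <;> simp [fromBlocks_mulVec, LinearEquiv.sumArrowLequivProdArrow,
      Equiv.sumArrowEquivProdArrow]
  rw [Matrix.rank, Matrix.rank, Matrix.rank, hconj, LinearMap.range_comp, LinearMap.range_comp,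
    LinearEquiv.range, Submodule.map_top, LinearEquiv.finrank_map_eq, LinearMap.range_prodMap,
    Submodule.finrank_prod]

theorem Matrix.rank_mul_mul_of_mul_eq_one {R l l' m m' : Type*} [CommRing R]
    [StrongRankCondition R] [Fintype l] [Fintype l'] [Fintype m] [Fintype m'] [DecidableEq l]
    [DecidableEq m] {P : Matrix l' l R} {P' : Matrix l l' R} {Q : Matrix m m' R}
    {Q' : Matrix m' m R} (hP : P' * P = 1) (hQ : Q * Q' = 1) (E : Matrix l m R) :
    (P * E * Q).rank = E.rank := by
  refine le_antisymm ((rank_mul_le_left _ _).trans (rank_mul_le_right _ _)) ?_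
  calc E.rank = (P' * (P * E * Q) * Q').rank := by
        rw [Matrix.mul_assoc, Matrix.mul_assoc, hQ, Matrix.mul_one, ← Matrix.mul_assoc, hP,
          Matrix.one_mul]
    _ ≤ (P * E * Q).rank := (rank_mul_le_left _ _).trans (rank_mul_le_right _ _)

theorem Matrix.mul_mul_eq_of_forall_smul_sub {R l l' m m' : Type*} [Ring R] [Fintype l]
    [Fintype m] {P : Matrix l' l R} {E F : Matrix l m R} {Q : Matrix m m' R}
    {G H : Matrix l' m' R} (h : ∀ s : R, P * (s • E - F) * Q = s • G - H) :
    P * E * Q = G := by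
  have h1 := h 1
  have h0 := h 0
  simp only [one_smul, zero_smul, zero_sub, Matrix.mul_sub, Matrix.sub_mul, Matrix.mul_neg,
    Matrix.neg_mul, neg_inj] at h0 h1
  rw [← sub_add_cancel (P * E * Q) (P * F * Q), h1, h0, sub_add_cancel]

theorem stmt_7_general (n r : ℕ) (hr : r ≤ n)
    (A : Matrix (Fin n) (Fin n) ℂ) (b c : Fin n → ℂ) (d : ℂ)
    (P : Matrix (Fin (n - r) ⊕ Fin (r + 1)) (Fin n ⊕ Unit) ℂ)
    (P' : Matrix (Fin n ⊕ Unit) (Fin (n - r) ⊕ Fin (r + 1)) ℂ)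
    (Q : Matrix (Fin n ⊕ Unit) (Fin (n - r) ⊕ Fin (r + 1)) ℂ)
    (Q' : Matrix (Fin (n - r) ⊕ Fin (r + 1)) (Fin n ⊕ Unit) ℂ)
    (hP'P : P' * P = 1) (hQQ' : Q * Q' = 1)
    (Lam : Matrix (Fin (n - r)) (Fin (n - r)) ℂ)
    (N : Matrix (Fin (r + 1)) (Fin (r + 1)) ℂ) (hN : IsNilpotent N)
    (hdecomp : ∀ s : ℂ,
      P * (Matrix.fromBlocks (s • (1 : Matrix (Fin n) (Fin n) ℂ) - A)
            (Matrix.of fun i (_ : Unit) => -b i)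
            (Matrix.of fun (_ : Unit) j => -c j)
            (Matrix.of fun (_ : Unit) (_ : Unit) => -d)) * Q
        = Matrix.fromBlocks (s • (1 : Matrix (Fin (n - r)) (Fin (n - r)) ℂ) - Lam) 0 0
            (s • N - 1))
    : N.rank = r ∧ N ^ r ≠ 0 ∧ N ^ (r + 1) = 0 := by
  let E : Matrix (Fin n ⊕ Unit) (Fin n ⊕ Unit) ℂ := fromBlocks 1 0 0 0
  let F : Matrix (Fin n ⊕ Unit) (Fin n ⊕ Unit) ℂ :=
    fromBlocks A (of fun i _ => b i) (of fun _ j => c j) (of fun _ _ => d)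
  have hpencil (s : ℂ) :
      P * (s • E - F) * Q = s • fromBlocks 1 0 0 N - fromBlocks Lam 0 0 1 := by
    convert hdecomp s using 3 <;> ext (i | i) (j | j) <;> simp [E, F]
  have hrank : N.rank = r := by
    have := rank_mul_mul_of_mul_eq_one hP'P hQQ' E
    rw [mul_mul_eq_of_forall_smul_sub hpencil] at this
    simp only [E, rank_fromBlocks_zero_zero, rank_one, rank_zero, Fintype.card_fin] at this
    omega
  have hpow := pow_card_eq_zero_of_isNilpotent hN
  rw [Fintype.card_fin] at hpow
  refine ⟨hrank, fun h => ?_, hpow⟩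
  have := card_le_mul_card_sub_rank_of_pow_eq_zero h
  rw [hrank, Fintype.card_fin, Nat.add_sub_cancel_left, mul_one] at this
  omega

/-- In the Weierstrass form, the nilpotent `N` has rank exactly `r`, i.e. it consists of a
single Jordan block: `N ^ r ≠ 0` and `N ^ (r + 1) = 0`. -/
theorem stmt_7 (n r : ℕ) (hr : r ≤ n)
    (A : Matrix (Fin n) (Fin n) ℂ) (b c : Fin n → ℂ) (d : ℂ)
    (P : Matrix (Fin (n - r) ⊕ Fin (r + 1)) (Fin n ⊕ Unit) ℂ)
    (P' : Matrix (Fin n ⊕ Unit) (Fin (n - r) ⊕ Fin (r + 1)) ℂ)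
    (Q : Matrix (Fin n ⊕ Unit) (Fin (n - r) ⊕ Fin (r + 1)) ℂ)
    (Q' : Matrix (Fin (n - r) ⊕ Fin (r + 1)) (Fin n ⊕ Unit) ℂ)
    (hPP' : P * P' = 1) (hP'P : P' * P = 1) (hQQ' : Q * Q' = 1) (hQ'Q : Q' * Q = 1)
    (Lam : Matrix (Fin (n - r)) (Fin (n - r)) ℂ)
    (N : Matrix (Fin (r + 1)) (Fin (r + 1)) ℂ) (hN : IsNilpotent N)
    (hdecomp : ∀ s : ℂ,
      P * (Matrix.fromBlocks (s • (1 : Matrix (Fin n) (Fin n) ℂ) - A)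
            (Matrix.of fun i (_ : Unit) => -b i)
            (Matrix.of fun (_ : Unit) j => -c j)
            (Matrix.of fun (_ : Unit) (_ : Unit) => -d)) * Q
        = Matrix.fromBlocks (s • (1 : Matrix (Fin (n - r)) (Fin (n - r)) ℂ) - Lam) 0 0
            (s • N - 1))
    : N.rank = r ∧ N ^ r ≠ 0 ∧ N ^ (r + 1) = 0 :=
  stmt_7_general n r hr A b c d P P' Q Q' hP'P hQQ' Lam N hN hdecomp
end

section
/- Matrix completion: Let k, ℓ be positive integers and suppose [[U_11, U_31^T],[U_31, U_33]] ∈ 𝕊^{k+1} and [[U_22, U_32^T],[U_32, U_33]] ∈ 𝕊^{ℓ+1} are positive semidefinite, where U_33 is a 1×1 block. Then there exists U_21 ∈ ℝ^{ℓ×k} such that the block matrix [[U_11, U_21^T, U_31^T],[U_21, U_22, U_32^T],[U_31, U_32, U_33]] is positive semidefinite. -/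
/-!
If `U₃₃ > 0`, take `U₂₁ = U₃₂ᵀ U₃₃⁻¹ U₃₁`. The Schur complement of `U₃₃` in the completed matrix is
then block diagonal, its blocks being the Schur complements of `U₃₃` in the two given matrices, so
it is positive semidefinite. If `U₃₃ = 0`, positive semidefiniteness forces `U₃₁ = U₃₂ = 0`, and
`U₂₁ = 0` works.
-/

open Matrix
open scoped ComplexOrder

namespace Matrix

variable {𝕜 m n p : Type*} [RCLike 𝕜] [Fintype m] [Fintype n] [Fintype p]

theorem PosSemidef.fromBlocks_zero_zero {A : Matrix m m 𝕜} {D : Matrix n n 𝕜}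
    (hA : A.PosSemidef) (hD : D.PosSemidef) : (fromBlocks A 0 0 D).PosSemidef := by
  refine .of_dotProduct_mulVec_nonneg (hA.1.fromBlocks (by simp) hD.1) fun x => ?_
  rw [← Sum.elim_comp_inl_inr x]
  simp only [fromBlocks_mulVec, zero_mulVec, add_zero, zero_add, dotProduct_block]
  exact add_nonneg (hA.dotProduct_mulVec_nonneg _) (hD.dotProduct_mulVec_nonneg _)

theorem PosSemidef.eq_zero_of_fromBlocks_zero₂₂ {A : Matrix m m 𝕜} {B : Matrix n m 𝕜}
    (h : (fromBlocks A Bᴴ B 0).PosSemidef) : B = 0 := by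
  classical
  suffices hB : ∀ y, Bᴴ *ᵥ y = 0 by
    rw [← conjTranspose_eq_zero]
    exact ext_of_mulVec_single fun i => by rw [hB, zero_mulVec]
  intro y
  have hx : star (Sum.elim 0 y) ⬝ᵥ fromBlocks A Bᴴ B 0 *ᵥ Sum.elim 0 y = 0 := by
    simp [fromBlocks_mulVec, dotProduct_block, Function.star_sumElim]
  funext i
  simpa [fromBlocks_mulVec] using congrFun ((h.dotProduct_mulVec_zero_iff _).mp hx) (Sum.inl i)

theorem PosSemidef.fromBlocks_completion_of_zero {A : Matrix m m 𝕜} {A' : Matrix n n 𝕜}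
    {B : Matrix p m 𝕜} {B' : Matrix p n 𝕜}
    (h : (fromBlocks A Bᴴ B 0).PosSemidef) (h' : (fromBlocks A' B'ᴴ B' 0).PosSemidef) :
    (fromBlocks (fromBlocks A 0 0 A') (fromRows Bᴴ B'ᴴ) (fromCols B B') 0).PosSemidef := by
  obtain rfl := h.eq_zero_of_fromBlocks_zero₂₂
  obtain rfl := h'.eq_zero_of_fromBlocks_zero₂₂
  have hA : A.PosSemidef := h.submatrix Sum.inl
  have hA' : A'.PosSemidef := h'.submatrix Sum.inl
  simpa using (hA.fromBlocks_zero_zero hA').fromBlocks_zero_zero PosSemidef.zero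

theorem PosSemidef.fromBlocks_completion_of_posDef [DecidableEq p]
    {A : Matrix m m 𝕜} {A' : Matrix n n 𝕜} {B : Matrix p m 𝕜} {B' : Matrix p n 𝕜}
    {D : Matrix p p 𝕜} (h : (fromBlocks A Bᴴ B D).PosSemidef)
    (h' : (fromBlocks A' B'ᴴ B' D).PosSemidef) (hD : D.PosDef) :
    (fromBlocks (fromBlocks A (B'ᴴ * D⁻¹ * B)ᴴ (B'ᴴ * D⁻¹ * B) A')
      (fromRows Bᴴ B'ᴴ) (fromCols B B') D).PosSemidef := by
  have := hD.isUnit.invertible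
  have hS := (PosDef.fromBlocks₂₂ A Bᴴ hD).mp (by simpa using h)
  have hS' := (PosDef.fromBlocks₂₂ A' B'ᴴ hD).mp (by simpa using h')
  rw [conjTranspose_conjTranspose] at hS hS'
  have hcols : fromCols B B' = (fromRows Bᴴ B'ᴴ)ᴴ := by
    simp [conjTranspose_fromRows_eq_fromCols_conjTranspose]
  have hschur : fromBlocks A (B'ᴴ * D⁻¹ * B)ᴴ (B'ᴴ * D⁻¹ * B) A'
      - fromRows Bᴴ B'ᴴ * D⁻¹ * (fromRows Bᴴ B'ᴴ)ᴴ
      = fromBlocks (A - Bᴴ * D⁻¹ * B) 0 0 (A' - B'ᴴ * D⁻¹ * B') := by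
    simp [fromRows_mul, conjTranspose_fromRows_eq_fromCols_conjTranspose,
      sub_eq_add_neg, fromBlocks_neg, fromBlocks_add, Matrix.mul_assoc, hD.1.inv.eq]
  rw [hcols, PosDef.fromBlocks₂₂ _ _ hD, hschur]
  exact hS.fromBlocks_zero_zero hS'

end Matrix

theorem stmt_12_general (k l : ℕ)
    (U11 : Matrix (Fin k) (Fin k) ℝ) (U22 : Matrix (Fin l) (Fin l) ℝ)
    (U31 : Matrix Unit (Fin k) ℝ) (U32 : Matrix Unit (Fin l) ℝ) (U33 : ℝ)
    (h1 : (Matrix.fromBlocks U11 U31ᵀ U31 (Matrix.of fun (_ _ : Unit) => U33)).PosSemidef)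
    (h2 : (Matrix.fromBlocks U22 U32ᵀ U32 (Matrix.of fun (_ _ : Unit) => U33)).PosSemidef) :
    ∃ U21 : Matrix (Fin l) (Fin k) ℝ,
      (Matrix.fromBlocks
        (Matrix.fromBlocks U11 U21ᵀ U21 U22)
        (Matrix.of fun (i : Fin k ⊕ Fin l) (u : Unit) =>
          Sum.elim (fun a => U31 u a) (fun b => U32 u b) i)
        (Matrix.of fun (u : Unit) (j : Fin k ⊕ Fin l) =>
          Sum.elim (fun a => U31 u a) (fun b => U32 u b) j)
        (Matrix.of fun (_ _ : Unit) => U33)).PosSemidef := by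
  have hcol : (of fun (i : Fin k ⊕ Fin l) (u : Unit) =>
      Sum.elim (fun a => U31 u a) (fun b => U32 u b) i) = fromRows U31ᴴ U32ᴴ := by
    ext (i | i) u <;> rfl
  have hrow : (of fun (u : Unit) (j : Fin k ⊕ Fin l) =>
      Sum.elim (fun a => U31 u a) (fun b => U32 u b) j) = fromCols U31 U32 := by
    ext u (j | j) <;> rfl
  simp only [hcol, hrow, ← conjTranspose_eq_transpose_of_trivial] at h1 h2 ⊢
  obtain rfl | hU33 := (show 0 ≤ U33 from h1.diag_nonneg (i := Sum.inr ())).eq_or_lt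
  · have hD : (of fun _ _ => 0 : Matrix Unit Unit ℝ) = 0 := rfl
    rw [hD] at h1 h2 ⊢
    exact ⟨0, by simpa using h1.fromBlocks_completion_of_zero h2⟩
  · have hD : (of fun _ _ => U33 : Matrix Unit Unit ℝ).PosDef := by
      rw [show (of fun _ _ => U33 : Matrix Unit Unit ℝ) = diagonal fun _ => U33 by ext; simp]
      exact posDef_diagonal_iff.mpr fun _ => hU33
    exact ⟨_, h1.fromBlocks_completion_of_posDef h2 hD⟩

/-- Matrix completion: if `[[U₁₁, U₃₁ᵀ],[U₃₁, U₃₃]] ⪰ 0` and `[[U₂₂, U₃₂ᵀ],[U₃₂, U₃₃]] ⪰ 0`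
(with `U₃₃` a scalar), then there exists `U₂₁` such that the full block matrix
`[[U₁₁, U₂₁ᵀ, U₃₁ᵀ],[U₂₁, U₂₂, U₃₂ᵀ],[U₃₁, U₃₂, U₃₃]]` is positive semidefinite. -/
theorem stmt_12 (k l : ℕ) (hk : 0 < k) (hl : 0 < l)
    (U11 : Matrix (Fin k) (Fin k) ℝ) (U22 : Matrix (Fin l) (Fin l) ℝ)
    (U31 : Matrix Unit (Fin k) ℝ) (U32 : Matrix Unit (Fin l) ℝ) (U33 : ℝ)
    (h1 : (Matrix.fromBlocks U11 U31ᵀ U31 (Matrix.of fun (_ _ : Unit) => U33)).PosSemidef)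
    (h2 : (Matrix.fromBlocks U22 U32ᵀ U32 (Matrix.of fun (_ _ : Unit) => U33)).PosSemidef) :
    ∃ U21 : Matrix (Fin l) (Fin k) ℝ,
      (Matrix.fromBlocks
        (Matrix.fromBlocks U11 U21ᵀ U21 U22)
        (Matrix.of fun (i : Fin k ⊕ Fin l) (u : Unit) =>
          Sum.elim (fun a => U31 u a) (fun b => U32 u b) i)
        (Matrix.of fun (u : Unit) (j : Fin k ⊕ Fin l) =>
          Sum.elim (fun a => U31 u a) (fun b => U32 u b) j)
        (Matrix.of fun (_ _ : Unit) => U33)).PosSemidef :=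
  stmt_12_general k l U11 U22 U31 U32 U33 h1 h2
end

section
/- Let f_1, f_2, h_1, h_2, γ ∈ ℝ with (f_1, f_2) ≠ (0,0). There exists p ∈ ℝ such that both 2×2 matrices [[γ f_1^2 - p, -h_1],[-h_1, γ]] and [[γ f_2^2 + p, -h_2],[-h_2, γ]] are positive semidefinite if and only if γ ≥ sqrt((h_1^2 + h_2^2)/(f_1^2 + f_2^2)). -/
open Matrix

lemma psd_fin_two_iff (a b c : ℝ) :
    (!![a, b; b, c] : Matrix (Fin 2) (Fin 2) ℝ).PosSemidef ↔
      0 ≤ a ∧ 0 ≤ c ∧ b ^ 2 ≤ a * c := by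
  rw [Matrix.posSemidef_iff_dotProduct_mulVec]
  constructor
  · rintro ⟨_, h⟩
    have h1 := h ![1, 0]
    have h2 := h ![0, 1]
    have h3 := h ![b, -a]
    have h4 := h ![1, 1]
    have h5 := h ![1, -1]
    have h6 := h ![c, -b]
    simp [Matrix.mulVec, dotProduct, Fin.sum_univ_two] at h1 h2 h3 h4 h5 h6
    refine ⟨h1, h2, ?_⟩
    nlinarith [h1, h2, h3, h4, h5, h6, mul_nonneg h4 h5]
  · rintro ⟨ha, hc, hb⟩
    constructor
    · ext i j; fin_cases i <;> fin_cases j <;> simp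
    · intro x
      simp [Matrix.mulVec, dotProduct, Fin.sum_univ_two]
      rcases eq_or_lt_of_le ha with h0 | ha'
      · have hb0 : b = 0 := by nlinarith
        subst hb0
        nlinarith [mul_nonneg hc (sq_nonneg (x 1)), sq_nonneg (x 0)]
      · nlinarith [sq_nonneg (a * x 0 + b * x 1),
          mul_nonneg (sub_nonneg.2 hb) (sq_nonneg (x 1)), ha'.le]

/-- There exists `p` making both `[[γf₁² - p, -h₁],[-h₁, γ]]` and `[[γf₂² + p, -h₂],[-h₂, γ]]`
positive semidefinite iff `γ ≥ √((h₁² + h₂²)/(f₁² + f₂²))`. -/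
theorem stmt_13 (f1 f2 h1 h2 γ : ℝ) (hf : (f1, f2) ≠ (0, 0)) :
    (∃ p : ℝ,
        (!![γ * f1 ^ 2 - p, -h1; -h1, γ] : Matrix (Fin 2) (Fin 2) ℝ).PosSemidef ∧
        (!![γ * f2 ^ 2 + p, -h2; -h2, γ] : Matrix (Fin 2) (Fin 2) ℝ).PosSemidef)
      ↔ γ ≥ Real.sqrt ((h1 ^ 2 + h2 ^ 2) / (f1 ^ 2 + f2 ^ 2)) := by
  have hD : 0 < f1 ^ 2 + f2 ^ 2 := by
    rcases (Prod.mk.injEq .. ▸ hf : ¬(f1 = 0 ∧ f2 = 0)) with h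
    rcases eq_or_ne f1 0 with rfl | h1'
    · have : f2 ≠ 0 := fun h2' => h ⟨rfl, h2'⟩
      positivity
    · positivity
  constructor
  · rintro ⟨p, hA, hB⟩
    rw [psd_fin_two_iff] at hA hB
    obtain ⟨ha1, hγ, hc1⟩ := hA
    obtain ⟨ha2, -, hc2⟩ := hB
    have hq : (h1 ^ 2 + h2 ^ 2) / (f1 ^ 2 + f2 ^ 2) ≤ γ ^ 2 := by
      rw [div_le_iff₀ hD]
      nlinarith
    calc Real.sqrt ((h1 ^ 2 + h2 ^ 2) / (f1 ^ 2 + f2 ^ 2))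
        ≤ Real.sqrt (γ ^ 2) := Real.sqrt_le_sqrt hq
      _ = γ := by rw [Real.sqrt_sq hγ]
  · intro hγ'
    have hγ0 : 0 ≤ γ := le_trans (Real.sqrt_nonneg _) hγ'
    have hqnn : 0 ≤ (h1 ^ 2 + h2 ^ 2) / (f1 ^ 2 + f2 ^ 2) := by positivity
    have hq : h1 ^ 2 + h2 ^ 2 ≤ γ ^ 2 * (f1 ^ 2 + f2 ^ 2) := by
      have := Real.sq_sqrt hqnn
      have h2' : Real.sqrt ((h1 ^ 2 + h2 ^ 2) / (f1 ^ 2 + f2 ^ 2)) ^ 2 ≤ γ ^ 2 := by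
        apply pow_le_pow_left₀ (Real.sqrt_nonneg _) hγ'
      rw [this, div_le_iff₀ hD] at h2'
      linarith
    rcases eq_or_lt_of_le hγ0 with h0 | hγpos
    · have hγ2 : γ ^ 2 = 0 := by rw [← h0]; ring
      have hh1 : h1 = 0 := by nlinarith [sq_nonneg h1, sq_nonneg h2]
      have hh2 : h2 = 0 := by nlinarith [sq_nonneg h1, sq_nonneg h2]
      refine ⟨0, ?_, ?_⟩ <;> rw [psd_fin_two_iff] <;>
        simp [hh1, hh2, ← h0]
    · refine ⟨h2 ^ 2 / γ - γ * f2 ^ 2, ?_, ?_⟩ <;> rw [psd_fin_two_iff]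
      · have e1 : γ * f1 ^ 2 - (h2 ^ 2 / γ - γ * f2 ^ 2)
            = γ * (f1 ^ 2 + f2 ^ 2) - h2 ^ 2 / γ := by ring
        have e2 : (γ * (f1 ^ 2 + f2 ^ 2) - h2 ^ 2 / γ) * γ
            = γ ^ 2 * (f1 ^ 2 + f2 ^ 2) - h2 ^ 2 := by field_simp
        have hge : h1 ^ 2 ≤ (γ * (f1 ^ 2 + f2 ^ 2) - h2 ^ 2 / γ) * γ := by
          rw [e2]; linarith
        have ha1 : 0 ≤ γ * (f1 ^ 2 + f2 ^ 2) - h2 ^ 2 / γ := by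
          nlinarith [hge, sq_nonneg h1]
        rw [e1]
        exact ⟨ha1, hγ0, by nlinarith [hge]⟩
      · have : h2 ^ 2 / γ * γ = h2 ^ 2 := div_mul_cancel₀ _ hγpos.ne'
        have h2nn : 0 ≤ h2 ^ 2 / γ := by positivity
        refine ⟨by nlinarith, hγ0, by nlinarith⟩
end

section
/- Let F, G ∈ 𝕊^n be positive definite, H_1, H_2 ∈ 𝕊^n_+ positive semidefinite, J ∈ ℝ^{n×n}, and γ > 0. Then the 2n×2n block matrix [[γF - (1/γ)H_1, -J^T],[-J, γG - (1/γ)H_2]] is positive semidefinite if and only if γ ≥ λ_max(E), where E is the 4n×4n symmetric matrix E = [[0, F^{-1/2} J^T G^{-1/2}, F^{-1/2} H_1^{1/2}, 0],[G^{-1/2} J F^{-1/2}, 0, 0, G^{-1/2} H_2^{1/2}],[H_1^{1/2} F^{-1/2}, 0, 0, 0],[0, H_2^{1/2} G^{-1/2}, 0, 0]]. -/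
open Matrix

/-- The square root of a positive semidefinite matrix, as defined in Mathlib (Dec 2024),
since removed in favour of `CFC.sqrt`. -/
noncomputable def Matrix.PosSemidef.sqrt {n : Type*} [Fintype n]
    [DecidableEq n] {A : Matrix n n ℝ} (hA : A.PosSemidef) : Matrix n n ℝ :=
  hA.1.eigenvectorUnitary.1 * diagonal ((↑) ∘ (fun x : ℝ => √x) ∘ hA.1.eigenvalues) *
    (star hA.1.eigenvectorUnitary : Matrix n n ℝ)

lemma psd_sqrt_mul_self {n : Type*} [Fintype n] [DecidableEq n] {A : Matrix n n ℝ}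
    (hA : A.PosSemidef) : hA.sqrt * hA.sqrt = A := by
  have hU2 : (star (hA.1.eigenvectorUnitary : Matrix n n ℝ)) * (hA.1.eigenvectorUnitary : Matrix n n ℝ) = 1 :=
    Unitary.star_mul_self_of_mem hA.1.eigenvectorUnitary.2
  conv_rhs => rw [hA.1.spectral_theorem, Unitary.conjStarAlgAut_apply]
  unfold Matrix.PosSemidef.sqrt
  calc _ = (hA.1.eigenvectorUnitary : Matrix n n ℝ) *
        (diagonal ((↑) ∘ (fun x : ℝ => √x) ∘ hA.1.eigenvalues) *
          ((star (hA.1.eigenvectorUnitary : Matrix n n ℝ)) * (hA.1.eigenvectorUnitary : Matrix n n ℝ)) *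
          diagonal ((↑) ∘ (fun x : ℝ => √x) ∘ hA.1.eigenvalues)) *
        (star hA.1.eigenvectorUnitary : Matrix n n ℝ) := by simp only [Matrix.mul_assoc]
    _ = _ := by
      rw [hU2, Matrix.mul_one, diagonal_mul_diagonal]
      congr 2
      ext i j
      simp only [diagonal_apply, Function.comp_apply, RCLike.ofReal_real_eq_id, id]
      split_ifs
      · exact Real.mul_self_sqrt (hA.eigenvalues_nonneg _)
      · rfl

lemma psd_sqrt_herm {n : Type*} [Fintype n] [DecidableEq n] {A : Matrix n n ℝ}
    (hA : A.PosSemidef) : hA.sqrtᴴ = hA.sqrt := by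
  unfold Matrix.PosSemidef.sqrt
  rw [conjTranspose_mul, conjTranspose_mul, diagonal_conjTranspose, Matrix.mul_assoc]
  simp only [star_trivial]
  rfl

lemma conj_psd_iff {m : Type*} [Fintype m] [DecidableEq m] (M P : Matrix m m ℝ)
    (hP : IsUnit P.det) : (Pᴴ * M * P).PosSemidef ↔ M.PosSemidef := by
  constructor
  · intro h
    have h2 := h.conjTranspose_mul_mul_same P⁻¹
    have : P⁻¹ᴴ * (Pᴴ * M * P) * P⁻¹ = M := by
      rw [conjTranspose_nonsing_inv]
      calc Pᴴ⁻¹ * (Pᴴ * M * P) * P⁻¹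
          = (Pᴴ⁻¹ * Pᴴ) * M * (P * P⁻¹) := by simp only [Matrix.mul_assoc]
        _ = M := by
            rw [Matrix.nonsing_inv_mul _ (by simpa using hP), Matrix.mul_nonsing_inv _ hP,
              Matrix.one_mul, Matrix.mul_one]
    rwa [this] at h2
  · intro h; exact h.conjTranspose_mul_mul_same P

lemma eig_sup_iff {m : Type*} [Fintype m] [DecidableEq m] (E : Matrix m m ℝ)
    (hEh : E.IsHermitian) (γ : ℝ) :
    (γ • (1 : Matrix m m ℝ) - E).PosSemidef ↔ ∀ i, hEh.eigenvalues i ≤ γ := by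
  have hU1 : (hEh.eigenvectorUnitary : Matrix m m ℝ) * (star (hEh.eigenvectorUnitary : Matrix m m ℝ)) = 1 :=
    Unitary.mul_star_self_of_mem hEh.eigenvectorUnitary.2
  have hU2 : (star (hEh.eigenvectorUnitary : Matrix m m ℝ)) * (hEh.eigenvectorUnitary : Matrix m m ℝ) = 1 :=
    Unitary.star_mul_self_of_mem hEh.eigenvectorUnitary.2
  set U : Matrix m m ℝ := (hEh.eigenvectorUnitary : Matrix m m ℝ)
  have key : γ • (1 : Matrix m m ℝ) - E
      = U * diagonal (fun i => γ - hEh.eigenvalues i) * star U := by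
    conv_lhs => rw [hEh.spectral_theorem, ← hU1]
    rw [Unitary.conjStarAlgAut_apply, RCLike.ofReal_real_eq_id]
    have : diagonal (fun i => γ - hEh.eigenvalues i)
        = γ • (1 : Matrix m m ℝ) - diagonal (id ∘ hEh.eigenvalues) := by
      rw [smul_one_eq_diagonal, ← diagonal_sub]; rfl
    rw [this, Matrix.mul_sub, Matrix.sub_mul, Matrix.mul_smul, Matrix.smul_mul, Matrix.mul_one]
  rw [key]
  rw [show (star U : Matrix m m ℝ) = Uᴴ from rfl]
  constructor
  · intro h
    have h2 := h.conjTranspose_mul_mul_same U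
    have : Uᴴ * (U * diagonal (fun i => γ - hEh.eigenvalues i) * Uᴴ) * U
        = diagonal (fun i => γ - hEh.eigenvalues i) := by
      calc Uᴴ * (U * diagonal (fun i => γ - hEh.eigenvalues i) * Uᴴ) * U
          = (Uᴴ * U) * diagonal (fun i => γ - hEh.eigenvalues i) * (Uᴴ * U) := by
            simp only [Matrix.mul_assoc]
        _ = _ := by rw [show Uᴴ * U = 1 from hU2]; simp
    rw [this] at h2
    intro i
    have := posSemidef_diagonal_iff.mp h2 i
    linarith
  · intro h
    exact ((posSemidef_diagonal_iff.mpr (fun i => by linarith [h i])).mul_mul_conjTranspose_same U)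

/-- For `F, G ≻ 0`, `H₁, H₂ ⪰ 0`, `J` and `γ > 0`, the block matrix
`[[γF - γ⁻¹H₁, -Jᵀ],[-J, γG - γ⁻¹H₂]]` is positive semidefinite iff `γ ≥ λ_max(E)`, where
`E` is the `4n × 4n` symmetric matrix built from `F^{-1/2}, G^{-1/2}, H₁^{1/2}, H₂^{1/2}, J`. -/
theorem stmt_14 (n : ℕ) (hn : 0 < n)
    (F G H1 H2 J : Matrix (Fin n) (Fin n) ℝ)
    (hF : F.PosDef) (hG : G.PosDef) (hH1 : H1.PosSemidef) (hH2 : H2.PosSemidef)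
    (γ : ℝ) (hγ : 0 < γ)
    (Fi Gi : Matrix (Fin n) (Fin n) ℝ)
    (hFi : Fi = (hF.posSemidef.sqrt)⁻¹) (hGi : Gi = (hG.posSemidef.sqrt)⁻¹)
    (E : Matrix ((Fin n ⊕ Fin n) ⊕ (Fin n ⊕ Fin n)) ((Fin n ⊕ Fin n) ⊕ (Fin n ⊕ Fin n)) ℝ)
    (hE : E = Matrix.fromBlocks
      (Matrix.fromBlocks 0 (Fi * Jᵀ * Gi) (Gi * J * Fi) 0)
      (Matrix.fromBlocks (Fi * hH1.sqrt) 0 0 (Gi * hH2.sqrt))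
      (Matrix.fromBlocks (hH1.sqrt * Fi) 0 0 (hH2.sqrt * Gi)) 0)
    (hEh : E.IsHermitian) :
    (Matrix.fromBlocks (γ • F - γ⁻¹ • H1) (-Jᵀ) (-J) (γ • G - γ⁻¹ • H2)).PosSemidef
      ↔ (⨆ i, hEh.eigenvalues i) ≤ γ := by
  haveI : Nonempty (Fin n) := Fin.pos_iff_nonempty.mp hn
  set S := hF.posSemidef.sqrt with hS
  set T := hG.posSemidef.sqrt with hT
  set R1 := hH1.sqrt with hR1def
  set R2 := hH2.sqrt with hR2def
  -- determinants and inverses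
  have hSdet : IsUnit S.det := by
    have h1 : S * S = F := psd_sqrt_mul_self hF.posSemidef
    have h2 : S.det * S.det = F.det := by rw [← det_mul, h1]
    have hFdet : F.det ≠ 0 := ne_of_gt hF.det_pos
    exact isUnit_iff_ne_zero.mpr (fun h => hFdet (by rw [← h2, h, mul_zero]))
  have hTdet : IsUnit T.det := by
    have h1 : T * T = G := psd_sqrt_mul_self hG.posSemidef
    have h2 : T.det * T.det = G.det := by rw [← det_mul, h1]
    have hGdet : G.det ≠ 0 := ne_of_gt hG.det_pos
    exact isUnit_iff_ne_zero.mpr (fun h => hGdet (by rw [← h2, h, mul_zero]))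
  have hFidet : IsUnit Fi.det := hFi ▸ S.isUnit_nonsing_inv_det hSdet
  have hGidet : IsUnit Gi.det := hGi ▸ T.isUnit_nonsing_inv_det hTdet
  have hFiF : Fi * F * Fi = 1 := by
    rw [hFi, ← psd_sqrt_mul_self hF.posSemidef, ← hS]
    calc S⁻¹ * (S * S) * S⁻¹ = S⁻¹ * S * (S * S⁻¹) := by simp only [Matrix.mul_assoc]
      _ = 1 := by
        rw [Matrix.mul_nonsing_inv _ hSdet, Matrix.mul_one, Matrix.nonsing_inv_mul _ hSdet]
  have hGiG : Gi * G * Gi = 1 := by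
    rw [hGi, ← psd_sqrt_mul_self hG.posSemidef, ← hT]
    calc T⁻¹ * (T * T) * T⁻¹ = T⁻¹ * T * (T * T⁻¹) := by simp only [Matrix.mul_assoc]
      _ = 1 := by
        rw [Matrix.mul_nonsing_inv _ hTdet, Matrix.mul_one, Matrix.nonsing_inv_mul _ hTdet]
  -- hermitian facts
  have hSh : Sᴴ = S := psd_sqrt_herm hF.posSemidef
  have hTh : Tᴴ = T := psd_sqrt_herm hG.posSemidef
  have hFih : Fiᴴ = Fi := by rw [hFi, conjTranspose_nonsing_inv, hSh]
  have hGih : Giᴴ = Gi := by rw [hGi, conjTranspose_nonsing_inv, hTh]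
  have hR1h : R1ᴴ = R1 := psd_sqrt_herm hH1
  have hR2h : R2ᴴ = R2 := psd_sqrt_herm hH2
  -- congruence matrix
  set P : Matrix (Fin n ⊕ Fin n) (Fin n ⊕ Fin n) ℝ := fromBlocks Fi 0 0 Gi with hP
  have hPh : Pᴴ = P := by
    rw [hP, fromBlocks_conjTranspose, hFih, hGih, conjTranspose_zero]
  have hPdet : IsUnit P.det := by
    rw [hP, det_fromBlocks_zero₂₁]
    exact hFidet.mul hGidet
  -- the conjugated matrix
  set N : Matrix (Fin n ⊕ Fin n) (Fin n ⊕ Fin n) ℝ :=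
    fromBlocks (γ • (1 : Matrix (Fin n) (Fin n) ℝ) - γ⁻¹ • (Fi * H1 * Fi)) (-(Fi * Jᵀ * Gi))
      (-(Gi * J * Fi)) (γ • (1 : Matrix (Fin n) (Fin n) ℝ) - γ⁻¹ • (Gi * H2 * Gi)) with hN
  have e11 : Fi * (γ • F - γ⁻¹ • H1) * Fi
      = γ • (1 : Matrix (Fin n) (Fin n) ℝ) - γ⁻¹ • (Fi * H1 * Fi) := by
    simp only [Matrix.mul_sub, Matrix.sub_mul, Matrix.mul_smul, Matrix.smul_mul]
    rw [hFiF]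
  have e22 : Gi * (γ • G - γ⁻¹ • H2) * Gi
      = γ • (1 : Matrix (Fin n) (Fin n) ℝ) - γ⁻¹ • (Gi * H2 * Gi) := by
    simp only [Matrix.mul_sub, Matrix.sub_mul, Matrix.mul_smul, Matrix.smul_mul]
    rw [hGiG]
  have key1 : Pᴴ * (fromBlocks (γ • F - γ⁻¹ • H1) (-Jᵀ) (-J) (γ • G - γ⁻¹ • H2)) * P = N := by
    rw [hPh, hP, hN, fromBlocks_multiply, fromBlocks_multiply]
    simp only [Matrix.mul_zero, Matrix.zero_mul, add_zero, zero_add, neg_zero, Matrix.mul_neg,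
      Matrix.neg_mul, e11, e22, Matrix.mul_assoc]
  -- Schur complement side
  set K : Matrix (Fin n ⊕ Fin n) (Fin n ⊕ Fin n) ℝ :=
    fromBlocks 0 (Fi * Jᵀ * Gi) (Gi * J * Fi) 0 with hK
  set B0 : Matrix (Fin n ⊕ Fin n) (Fin n ⊕ Fin n) ℝ :=
    fromBlocks (Fi * R1) 0 0 (Gi * R2) with hB0
  have hBH : B0ᴴ = fromBlocks (R1 * Fi) 0 0 (R2 * Gi) := by
    rw [hB0, fromBlocks_conjTranspose, conjTranspose_zero, conjTranspose_mul,
      conjTranspose_mul, hFih, hGih, hR1h, hR2h]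
  have key2 : γ • (1 : Matrix ((Fin n ⊕ Fin n) ⊕ (Fin n ⊕ Fin n)) ((Fin n ⊕ Fin n) ⊕ (Fin n ⊕ Fin n)) ℝ) - E
      = fromBlocks (γ • (1 : Matrix (Fin n ⊕ Fin n) (Fin n ⊕ Fin n) ℝ) - K) (-B0) (-B0)ᴴ
        (γ • (1 : Matrix (Fin n ⊕ Fin n) (Fin n ⊕ Fin n) ℝ)) := by
    rw [conjTranspose_neg, hBH, hE, ← fromBlocks_one (l := Fin n ⊕ Fin n) (m := Fin n ⊕ Fin n),
      fromBlocks_smul]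
    simp only [sub_eq_add_neg, fromBlocks_neg, fromBlocks_add, smul_zero, add_zero, zero_add,
      neg_zero]
  haveI : Invertible (γ • (1 : Matrix (Fin n ⊕ Fin n) (Fin n ⊕ Fin n) ℝ)) :=
    ⟨γ⁻¹ • 1, by
      rw [Matrix.smul_mul, Matrix.one_mul, smul_smul, inv_mul_cancel₀ hγ.ne', one_smul], by
      rw [Matrix.smul_mul, Matrix.one_mul, smul_smul, mul_inv_cancel₀ hγ.ne', one_smul]⟩
  have hD : (γ • (1 : Matrix (Fin n ⊕ Fin n) (Fin n ⊕ Fin n) ℝ)).PosDef := by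
    exact PosDef.one.smul hγ
  have hinv : (γ • (1 : Matrix (Fin n ⊕ Fin n) (Fin n ⊕ Fin n) ℝ))⁻¹ = γ⁻¹ • 1 :=
    Matrix.inv_eq_right_inv (by
      rw [Matrix.smul_mul, Matrix.one_mul, smul_smul, mul_inv_cancel₀ hγ.ne', one_smul])
  have hBB : B0 * B0ᴴ = fromBlocks (Fi * H1 * Fi) 0 0 (Gi * H2 * Gi) := by
    rw [hBH, hB0, fromBlocks_multiply]
    simp only [Matrix.mul_zero, Matrix.zero_mul, add_zero, zero_add]
    rw [show Fi * R1 * (R1 * Fi) = Fi * H1 * Fi from by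
        rw [Matrix.mul_assoc Fi R1 (R1 * Fi), ← Matrix.mul_assoc R1 R1 Fi, psd_sqrt_mul_self hH1,
          ← Matrix.mul_assoc],
      show Gi * R2 * (R2 * Gi) = Gi * H2 * Gi from by
        rw [Matrix.mul_assoc Gi R2 (R2 * Gi), ← Matrix.mul_assoc R2 R2 Gi, psd_sqrt_mul_self hH2,
          ← Matrix.mul_assoc]]
  have key3 : (γ • (1 : Matrix (Fin n ⊕ Fin n) (Fin n ⊕ Fin n) ℝ) - K)
      - (-B0) * (γ • (1 : Matrix (Fin n ⊕ Fin n) (Fin n ⊕ Fin n) ℝ))⁻¹ * (-B0)ᴴ = N := by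
    simp only [hinv, conjTranspose_neg, Matrix.neg_mul, Matrix.mul_neg, neg_neg]
    rw [Matrix.mul_smul, Matrix.mul_one, Matrix.smul_mul, hBB]
    rw [hN, hK, ← fromBlocks_one (l := Fin n) (m := Fin n), fromBlocks_smul, fromBlocks_smul]
    simp only [sub_eq_add_neg, fromBlocks_neg, fromBlocks_add]
    simp [smul_zero]
  -- assemble
  have step1 : (fromBlocks (γ • F - γ⁻¹ • H1) (-Jᵀ) (-J) (γ • G - γ⁻¹ • H2)).PosSemidef
      ↔ N.PosSemidef := by
    rw [← conj_psd_iff _ P hPdet, key1]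
  have step2 : (γ • (1 : Matrix ((Fin n ⊕ Fin n) ⊕ (Fin n ⊕ Fin n)) ((Fin n ⊕ Fin n) ⊕ (Fin n ⊕ Fin n)) ℝ) - E).PosSemidef
      ↔ N.PosSemidef := by
    rw [key2, PosDef.fromBlocks₂₂ _ _ hD, key3]
  rw [step1, ← step2, eig_sup_iff _ hEh γ]
  exact (ciSup_le_iff (Finite.bddAbove_range _)).symm
end

section
/- Let λ ∈ ℂ \ {0} be purely imaginary and define F(λ) = [[0, Im(λ)],[-Im(λ), 0]] ∈ ℝ^{2×2}. If Z ∈ 𝕊^2_+ is a real symmetric positive semidefinite 2×2 matrix such that F(λ)Z + Z F(λ)^T is positive semidefinite, then F(λ)Z + Z F(λ)^T = 0 and Z is a nonnegative scalar multiple of the identity, i.e., Z = zI_2 with z ≥ 0. -/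
open Matrix

/-- For a nonzero purely imaginary `λ` and `F(λ) = [[0, Im λ],[-Im λ, 0]]`: if `Z ⪰ 0` and
`F(λ) Z + Z F(λ)ᵀ ⪰ 0`, then `F(λ) Z + Z F(λ)ᵀ = 0` and `Z = z I₂` for some `z ≥ 0`. -/
theorem stmt_17 (lam : ℂ) (hlam : lam ≠ 0) (hre : lam.re = 0)
    (Z : Matrix (Fin 2) (Fin 2) ℝ) (hZ : Z.PosSemidef)
    (hHe : ((!![0, lam.im; -lam.im, 0] : Matrix (Fin 2) (Fin 2) ℝ) * Z +
        Z * (!![0, lam.im; -lam.im, 0] : Matrix (Fin 2) (Fin 2) ℝ)ᵀ).PosSemidef) :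
    (!![0, lam.im; -lam.im, 0] : Matrix (Fin 2) (Fin 2) ℝ) * Z +
        Z * (!![0, lam.im; -lam.im, 0] : Matrix (Fin 2) (Fin 2) ℝ)ᵀ = 0 ∧
      ∃ z : ℝ, 0 ≤ z ∧ Z = z • (1 : Matrix (Fin 2) (Fin 2) ℝ) := by
  have hb : lam.im ≠ 0 := by
    intro h
    exact hlam (Complex.ext hre h)
  have hsym : Z 1 0 = Z 0 1 := by
    have := hZ.1
    have := congrFun (congrFun this 1) 0
    simpa [Matrix.conjTranspose_apply] using this.symm
  have h1 := hHe.dotProduct_mulVec_nonneg ![1, 0]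
  have h2 := hHe.dotProduct_mulVec_nonneg ![0, 1]
  have h3 := hHe.dotProduct_mulVec_nonneg ![1, 1]
  have h4 := hHe.dotProduct_mulVec_nonneg ![1, -1]
  simp [dotProduct, Matrix.mulVec, Matrix.vecMul, Matrix.mul_apply, Fin.sum_univ_two,
    Matrix.add_apply, Matrix.vecHead, Matrix.vecTail, hsym] at h1 h2 h3 h4
  have ha := hZ.dotProduct_mulVec_nonneg ![1, 0]
  simp [dotProduct, Matrix.mulVec, Fin.sum_univ_two] at ha
  have hc : Z 0 1 = 0 := by
    rcases mul_eq_zero.mp (le_antisymm (by linarith) (by linarith) :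
        lam.im * Z 0 1 = 0) with h | h
    · exact absurd h hb
    · exact h
  have hd : Z 1 1 = Z 0 0 := by
    have h5 : lam.im * (Z 1 1 - Z 0 0) = 0 := by nlinarith [h3, h4, hc]
    rcases mul_eq_zero.mp h5 with h | h
    · exact absurd h hb
    · linarith
  constructor
  · ext i j
    fin_cases i <;> fin_cases j <;>
      simp [Matrix.mul_apply, Matrix.mulVec, Matrix.vecMul, dotProduct, Fin.sum_univ_two, Matrix.vecHead, Matrix.vecTail, hsym, hc, hd] <;> ring
  · exact ⟨Z 0 0, by linarith, by
      ext i j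
      fin_cases i <;> fin_cases j <;> simp [hsym, hc, hd, Matrix.one_apply]⟩
end
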